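/- Let (Ω, P) be a probability space, and let μ be a Borel probability measure on ℝ supported on [0, 1] with density ρ with respect to Lebesgue measure. Suppose f : Ω × ℝ → ℝ is measurable, and for each ω ∈ Ω the map f_ω = f(ω, ·) restricts to a strictly increasing C¹ bijection of [0, 1] onto itself with strictly positive derivative. Assume the stationarity condition: for every Borel set A ⊆ [0, 1], ∫_Ω μ(f_ω^{-1}(A)) dP(ω) = μ(A) (i.e., the P-average of the pushforward measures (f_ω)_*μ equals μ). Assume also that (ω, x) ↦ log f_ω'(x) is integrable with respect to P ⊗ μ and that x ↦ log ρ(x) is μ-integrable. Then ∫_Ω ∫_{[0,1]} log f_ω'(x) dμ(x) dP(ω) ≤ 0. -/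

import Mathlib

/-!
Let `σ` be a measurable version of the density. For each `ω`, the ratio
`σ (f_ω x) * f_ω' x / σ x` is the density of the pullback of `μ` under `f_ω` relative to `μ`,
so by the change of variables formula its `μ`-integral is at most `1`. By stationarity
`log σ ∘ f` and `log σ` have the same integral against `P ⊗ μ`, so the Lyapunov exponent
equals the `P ⊗ μ`-integral of the logarithm of that ratio, which is `≤ 0` by `t ≤ exp t - 1`.
-/

open MeasureTheory Set Real
open scoped ENNReal

section Density

variable {X : Type*} [MeasurableSpace X] {ν : Measure X}

theorem exists_measurable_le_withDensity_eq (ρ : X → ℝ≥0∞) (hρ : ∫⁻ x, ρ x ∂ν ≠ ∞) :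
    ∃ g : X → ℝ≥0∞, Measurable g ∧ g ≤ ρ ∧ ν.withDensity g = ν.withDensity ρ := by
  obtain ⟨g, hgm, hgρ, hg_eq⟩ := exists_measurable_le_lintegral_eq ν ρ
  have : IsFiniteMeasure (ν.withDensity g) := isFiniteMeasure_withDensity (hg_eq ▸ hρ)
  refine ⟨g, hgm, hgρ, Measure.eq_of_le_of_measure_univ_eq ?_ ?_⟩
  · exact withDensity_mono (ae_of_all _ hgρ)
  · simp only [withDensity_apply _ MeasurableSet.univ, Measure.restrict_univ, hg_eq]

theorem ae_eq_of_withDensity_eq {ρ g : X → ℝ≥0∞} [IsFiniteMeasure (ν.withDensity ρ)]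
    (hg : Measurable g) (heq : ν.withDensity g = ν.withDensity ρ)
    (hρ : AEMeasurable ρ (ν.withDensity ρ)) : ρ =ᵐ[ν.withDensity ρ] g := by
  set μ := ν.withDensity ρ
  -- Off the `μ`-null measurable set `N`, `ρ` is measurable, so `withDensity_eq_iff` applies.
  set N := toMeasurable μ {x | ρ x ≠ hρ.mk ρ x}
  have hNm : MeasurableSet Nᶜ := (measurableSet_toMeasurable μ _).compl
  have hμN : μ N = 0 := by rw [measure_toMeasurable]; exact hρ.ae_eq_mk
  have hρ_eq_mk : ∀ x ∈ Nᶜ, ρ x = hρ.mk ρ x := fun x hx =>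
    not_not.1 fun h => hx (subset_toMeasurable μ _ h)
  have hμ_restrict : μ = (ν.restrict Nᶜ).withDensity ρ := by
    rw [← restrict_withDensity hNm, Measure.restrict_eq_self_of_ae_mem]
    exact measure_mono_null (fun x hx => not_not.1 hx) hμN
  have hmk : (ν.restrict Nᶜ).withDensity g = (ν.restrict Nᶜ).withDensity (hρ.mk ρ) := by
    rw [← restrict_withDensity hNm, heq, restrict_withDensity hNm]
    exact withDensity_congr_ae ((ae_restrict_iff' hNm).2 (ae_of_all _ hρ_eq_mk))
  have hg_fin : ∫⁻ x in Nᶜ, g x ∂ν ≠ ∞ := by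
    refine ne_top_of_le_ne_top ?_ (setLIntegral_le_lintegral _ _)
    rw [← setLIntegral_univ, ← withDensity_apply _ MeasurableSet.univ, heq]
    exact measure_ne_top μ univ
  have hg_mk : g =ᵐ[ν.restrict Nᶜ] hρ.mk ρ :=
    (withDensity_eq_iff hg.aemeasurable hρ.measurable_mk.aemeasurable hg_fin).1 hmk
  have hac : μ ≪ ν.restrict Nᶜ := hμ_restrict ▸ withDensity_absolutelyContinuous _ _
  exact hρ.ae_eq_mk.trans (hac.ae_eq hg_mk).symm

theorem exists_measurable_density_ae_eq {μ : Measure X} [IsFiniteMeasure μ] {ρ : X → ℝ}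
    (hμ : μ = ν.withDensity fun x => ENNReal.ofReal (ρ x))
    (hlog : AEStronglyMeasurable (fun x => Real.log (ρ x)) μ) :
    ∃ σ : X → ℝ, Measurable σ ∧ 0 ≤ σ ∧ μ = ν.withDensity (fun x => ENNReal.ofReal (σ x)) ∧
      (∀ᵐ x ∂μ, 0 < σ x) ∧ ρ =ᵐ[μ] σ := by
  subst hμ
  -- `ρ` need not be measurable: a measurable minorant `g` with the same density shows `0 < ρ`
  -- a.e., and this turns the a.e.-measurability of `log ρ` into that of `ρ`.
  obtain ⟨g, hgm, hgρ, hg⟩ := exists_measurable_le_withDensity_eq (ν := ν)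
    (fun x => ENNReal.ofReal (ρ x)) (by
      rw [← setLIntegral_univ, ← withDensity_apply _ MeasurableSet.univ]
      exact measure_ne_top _ _)
  have hg_ne_top : ∀ x, g x ≠ ∞ := fun x => ne_top_of_le_ne_top ENNReal.ofReal_ne_top (hgρ x)
  have hg_pos : ∀ᵐ x ∂ν.withDensity (fun x => ENNReal.ofReal (ρ x)), 0 < g x := by
    rw [← hg]
    exact (ae_withDensity_iff hgm).2 (ae_of_all _ fun x => pos_iff_ne_zero.2)
  have hρ_pos : ∀ᵐ x ∂ν.withDensity (fun x => ENNReal.ofReal (ρ x)), 0 < ρ x :=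
    hg_pos.mono fun x hx => ENNReal.ofReal_pos.1 (hx.trans_le (hgρ x))
  have hρ_meas : AEMeasurable (fun x => ENNReal.ofReal (ρ x))
      (ν.withDensity fun x => ENNReal.ofReal (ρ x)) :=
    (hlog.aemeasurable.exp.congr (hρ_pos.mono fun x hx => exp_log hx)).ennreal_ofReal
  have hρg := ae_eq_of_withDensity_eq hgm hg hρ_meas
  refine ⟨fun x => (g x).toReal, hgm.ennreal_toReal, fun x => ENNReal.toReal_nonneg, ?_, ?_, ?_⟩
  · simp_rw [ENNReal.ofReal_toReal (hg_ne_top _)]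
    exact hg.symm
  · filter_upwards [hg_pos] with x hx using ENNReal.toReal_pos hx.ne' (hg_ne_top x)
  · filter_upwards [hρg, hρ_pos] with x hx hpos
    rw [← hx, ENNReal.toReal_ofReal hpos.le]

end Density

theorem integral_nonpos_of_lintegral_exp_le_one {Y : Type*} [MeasurableSpace Y] {m : Measure Y}
    [IsProbabilityMeasure m] {h : Y → ℝ} (hh : Integrable h m)
    (hexp : ∫⁻ y, ENNReal.ofReal (exp (h y)) ∂m ≤ 1) : ∫ y, h y ∂m ≤ 0 := by
  have hexp_int : Integrable (fun y => exp (h y)) m :=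
    ⟨continuous_exp.comp_aestronglyMeasurable hh.1,
      (hasFiniteIntegral_iff_ofReal (ae_of_all _ fun y => (exp_pos _).le)).2
        (hexp.trans_lt ENNReal.one_lt_top)⟩
  have hexp_integral_le : ∫ y, exp (h y) ∂m ≤ 1 := by
    rw [integral_eq_lintegral_of_nonneg_ae (ae_of_all _ fun y => (exp_pos _).le) hexp_int.1]
    exact ENNReal.toReal_le_of_le_ofReal zero_le_one (by simpa using hexp)
  have hmono : ∫ y, (h y + 1) ∂m ≤ ∫ y, exp (h y) ∂m :=
    integral_mono (hh.add (integrable_const 1)) hexp_int fun y => add_one_le_exp (h y)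
  rw [integral_add hh (integrable_const 1), integral_const, probReal_univ, one_smul] at hmono
  linarith

theorem integral_add_comp_sub_comp {Y X : Type*} [MeasurableSpace Y] [MeasurableSpace X]
    {m : Measure Y} {μ : Measure X} {F G : Y → X} (hF : MeasurePreserving F m μ)
    (hG : MeasurePreserving G m μ) {L : Y → ℝ} {φ : X → ℝ} (hL : Integrable L m)
    (hφ : Integrable φ μ) :
    ∫ y, (L y + φ (F y) - φ (G y)) ∂m = ∫ y, L y ∂m := by
  have hcomp : ∀ {H : Y → X}, MeasurePreserving H m μ → ∫ y, φ (H y) ∂m = ∫ x, φ x ∂μ :=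
    fun hH => by rw [← integral_map hH.aemeasurable (hH.map_eq ▸ hφ.1), hH.map_eq]
  have hφF : Integrable (fun y => φ (F y)) m := hF.integrable_comp_of_integrable hφ
  have hφG : Integrable (fun y => φ (G y)) m := hG.integrable_comp_of_integrable hφ
  have hLφF : Integrable (fun y => L y + φ (F y)) m := hL.add hφF
  rw [integral_sub hLφF hφG, integral_add hL hφF, hcomp hF, hcomp hG, add_sub_cancel_right]

theorem map_prod_eq_of_stationary {Ω X : Type*} [MeasurableSpace Ω] [MeasurableSpace X]
    {P : Measure Ω} {μ : Measure X} [SFinite μ] {f : Ω × X → X} (hf : Measurable f)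
    {s : Set X} (hs : MeasurableSet s) (hμs : μ sᶜ = 0)
    (hmaps : ∀ ω, MapsTo (fun x => f (ω, x)) s s)
    (hstat : ∀ A : Set X, MeasurableSet A → A ⊆ s →
      ∫⁻ ω, μ ((fun x => f (ω, x)) ⁻¹' A) ∂P = μ A) :
    (P.prod μ).map f = μ := by
  ext A hA
  have hfiber : ∀ ω, μ (Prod.mk ω ⁻¹' (f ⁻¹' A)) = μ ((fun x => f (ω, x)) ⁻¹' (A ∩ s)) := by
    intro ω
    refine measure_congr ?_
    filter_upwards [measure_eq_zero_iff_ae_notMem.1 hμs] with x hx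
    have hfx : f (ω, x) ∈ s := hmaps ω (by simpa using hx)
    exact propext (and_iff_left hfx).symm
  rw [Measure.map_apply hf hA, Measure.prod_apply (hf hA), lintegral_congr hfiber,
    hstat _ (hA.inter hs) inter_subset_right, measure_inter_conull hμs]

theorem lintegral_ofReal_density_ratio_le {s : Set ℝ} (hs : MeasurableSet s) {φ φ' σ : ℝ → ℝ}
    (hφ' : ∀ x ∈ s, HasDerivWithinAt φ (φ' x) s x) (hφ : InjOn φ s) (hσm : Measurable σ)
    (hσ0 : 0 ≤ σ) :
    ∫⁻ x, ENNReal.ofReal (σ (φ x) * φ' x / σ x)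
        ∂(volume.restrict s).withDensity (fun x => ENNReal.ofReal (σ x))
      ≤ ∫⁻ x, ENNReal.ofReal (σ x) := by
  have hpointwise : ∀ x, ENNReal.ofReal (σ x) * ENNReal.ofReal (σ (φ x) * φ' x / σ x)
      ≤ ENNReal.ofReal |φ' x| * ENNReal.ofReal (σ (φ x)) := by
    intro x
    rcases (hσ0 x).eq_or_lt with hσx | hσx
    · simp [← hσx]
    rw [← ENNReal.ofReal_mul hσx.le, mul_div_cancel₀ _ hσx.ne',
      ← ENNReal.ofReal_mul (abs_nonneg _)]
    exact ENNReal.ofReal_le_ofReal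
      (by nlinarith [mul_nonneg (sub_nonneg.2 (le_abs_self (φ' x))) (hσ0 (φ x))])
  calc _ ≤ ∫⁻ x in s, ENNReal.ofReal (σ x) * ENNReal.ofReal (σ (φ x) * φ' x / σ x) :=
        lintegral_withDensity_le_lintegral_mul _ (by fun_prop) _
    _ ≤ ∫⁻ x in s, ENNReal.ofReal |φ' x| * ENNReal.ofReal (σ (φ x)) := lintegral_mono hpointwise
    _ = ∫⁻ x in φ '' s, ENNReal.ofReal (σ x) :=
        (lintegral_image_eq_lintegral_abs_deriv_mul hs hφ' hφ fun x => ENNReal.ofReal (σ x)).symm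
    _ ≤ ∫⁻ x, ENNReal.ofReal (σ x) := setLIntegral_le_lintegral _ _

theorem lintegral_prod_density_ratio_le_one {Ω : Type*} [MeasurableSpace Ω] (P : Measure Ω)
    [IsProbabilityMeasure P] {μ : Measure ℝ} [IsProbabilityMeasure μ] {σ : ℝ → ℝ}
    (hσm : Measurable σ) (hσ0 : 0 ≤ σ)
    (hμσ : μ = volume.withDensity fun x => ENNReal.ofReal (σ x)) {s : Set ℝ}
    (hs : MeasurableSet s) (hμs : μ sᶜ = 0) {f f' : Ω × ℝ → ℝ}
    (hderiv : ∀ ω, ∀ x ∈ s, HasDerivWithinAt (fun x => f (ω, x)) (f' (ω, x)) s x)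
    (hinj : ∀ ω, InjOn (fun x => f (ω, x)) s) :
    ∫⁻ p, ENNReal.ofReal (σ (f p) * f' p / σ p.2) ∂P.prod μ ≤ 1 := by
  have hμ_restrict : μ = (volume.restrict s).withDensity fun x => ENNReal.ofReal (σ x) := by
    rw [← restrict_withDensity hs, ← hμσ]
    exact (Measure.restrict_eq_self_of_ae_mem hμs).symm
  have hσ_total : ∫⁻ x, ENNReal.ofReal (σ x) = 1 := by
    rw [← setLIntegral_univ, ← withDensity_apply _ MeasurableSet.univ, ← hμσ, measure_univ]
  calc ∫⁻ p, ENNReal.ofReal (σ (f p) * f' p / σ p.2) ∂P.prod μ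
      ≤ ∫⁻ ω, ∫⁻ x, ENNReal.ofReal (σ (f (ω, x)) * f' (ω, x) / σ x) ∂μ ∂P :=
        lintegral_prod_le _
    _ ≤ ∫⁻ _, 1 ∂P := lintegral_mono fun ω => by
        rw [hμ_restrict, ← hσ_total]
        exact lintegral_ofReal_density_ratio_le hs (hderiv ω) (hinj ω) hσm hσ0
    _ = 1 := by simp

theorem stmt_11_general {Ω : Type*} [MeasurableSpace Ω] (P : Measure Ω)
    [IsProbabilityMeasure P]
    (ρ : ℝ → ℝ)
    (μ : Measure ℝ) [IsProbabilityMeasure μ]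
    (hμρ : μ = volume.withDensity (fun x => ENNReal.ofReal (ρ x)))
    (hsupp : μ ((Set.Icc (0:ℝ) 1)ᶜ) = 0)
    (f : Ω × ℝ → ℝ) (hf : Measurable f)
    (hbij : ∀ ω : Ω, Set.BijOn (fun x => f (ω, x)) (Set.Icc 0 1) (Set.Icc 0 1))
    (hC1 : ∀ ω : Ω, ContDiffOn ℝ 1 (fun x => f (ω, x)) (Set.Icc 0 1))
    (hpos : ∀ ω : Ω, ∀ x ∈ Set.Icc (0:ℝ) 1,
      0 < derivWithin (fun x => f (ω, x)) (Set.Icc 0 1) x)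
    (hstat : ∀ A : Set ℝ, MeasurableSet A → A ⊆ Set.Icc 0 1 →
      ∫⁻ ω, μ ((fun x => f (ω, x)) ⁻¹' A) ∂P = μ A)
    (hint : Integrable
      (fun p : Ω × ℝ => Real.log (derivWithin (fun x => f (p.1, x)) (Set.Icc 0 1) p.2))
      (P.prod μ))
    (hlogρ : Integrable (fun x => Real.log (ρ x)) μ) :
    ∫ ω, ∫ x, Real.log (derivWithin (fun x => f (ω, x)) (Set.Icc 0 1) x) ∂μ ∂P ≤ 0 := by
  obtain ⟨σ, hσm, hσ0, hμσ, hσ_pos, hρσ⟩ := exists_measurable_density_ae_eq hμρ hlogρ.1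
  have hlogσ : Integrable (fun x => log (σ x)) μ := hlogρ.congr (hρσ.fun_comp log)
  have hf_pres : MeasurePreserving f (P.prod μ) μ :=
    ⟨hf, map_prod_eq_of_stationary hf measurableSet_Icc hsupp (fun ω => (hbij ω).mapsTo) hstat⟩
  have hsnd_pres : MeasurePreserving Prod.snd (P.prod μ) μ := measurePreserving_snd
  have hexp_eq : ∀ᵐ p ∂P.prod μ, exp (log (derivWithin (fun x => f (p.1, x)) (Icc 0 1) p.2)
      + log (σ (f p)) - log (σ p.2))
      = σ (f p) * derivWithin (fun x => f (p.1, x)) (Icc 0 1) p.2 / σ p.2 := by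
    filter_upwards [hsnd_pres.quasiMeasurePreserving.ae (measure_eq_zero_iff_ae_notMem.1 hsupp),
      hsnd_pres.quasiMeasurePreserving.ae hσ_pos, hf_pres.quasiMeasurePreserving.ae hσ_pos]
      with p hp_mem hσp hσfp
    rw [exp_sub, exp_add, exp_log (hpos p.1 p.2 (by simpa using hp_mem)), exp_log hσfp,
      exp_log hσp, mul_comm]
  rw [integral_integral hint, ← integral_add_comp_sub_comp hf_pres hsnd_pres hint hlogσ]
  refine integral_nonpos_of_lintegral_exp_le_one
    ((hint.add (hf_pres.integrable_comp_of_integrable hlogσ)).sub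
      (hsnd_pres.integrable_comp_of_integrable hlogσ)) ?_
  rw [lintegral_congr_ae (hexp_eq.mono fun _ => congrArg ENNReal.ofReal)]
  exact lintegral_prod_density_ratio_le_one P hσm hσ0 hμσ measurableSet_Icc hsupp
    (fun ω x hx => ((hC1 ω).differentiableOn one_ne_zero x hx).hasDerivWithinAt)
    (fun ω => (hbij ω).injOn)

/-- For a family of random strictly increasing C¹ circle/interval maps
`f_ω : [0,1] → [0,1]` with positive derivative, if the probability measure `μ` (with
density `ρ` w.r.t. Lebesgue, supported on `[0,1]`) is stationary on average, then the
average Lyapunov exponent `∫∫ log f_ω'(x) dμ dP` is nonpositive. -/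
theorem stmt_11 {Ω : Type*} [MeasurableSpace Ω] (P : Measure Ω)
    [IsProbabilityMeasure P]
    (ρ : ℝ → ℝ) (hρ : ∀ x, 0 ≤ ρ x)
    (μ : Measure ℝ) [IsProbabilityMeasure μ]
    (hμρ : μ = volume.withDensity (fun x => ENNReal.ofReal (ρ x)))
    (hsupp : μ ((Set.Icc (0:ℝ) 1)ᶜ) = 0)
    (f : Ω × ℝ → ℝ) (hf : Measurable f)
    (hmono : ∀ ω : Ω, StrictMonoOn (fun x => f (ω, x)) (Set.Icc 0 1))
    (hbij : ∀ ω : Ω, Set.BijOn (fun x => f (ω, x)) (Set.Icc 0 1) (Set.Icc 0 1))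
    (hC1 : ∀ ω : Ω, ContDiffOn ℝ 1 (fun x => f (ω, x)) (Set.Icc 0 1))
    (hpos : ∀ ω : Ω, ∀ x ∈ Set.Icc (0:ℝ) 1,
      0 < derivWithin (fun x => f (ω, x)) (Set.Icc 0 1) x)
    (hstat : ∀ A : Set ℝ, MeasurableSet A → A ⊆ Set.Icc 0 1 →
      ∫⁻ ω, μ ((fun x => f (ω, x)) ⁻¹' A) ∂P = μ A)
    (hint : Integrable
      (fun p : Ω × ℝ => Real.log (derivWithin (fun x => f (p.1, x)) (Set.Icc 0 1) p.2))
      (P.prod μ))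
    (hlogρ : Integrable (fun x => Real.log (ρ x)) μ) :
    ∫ ω, ∫ x, Real.log (derivWithin (fun x => f (ω, x)) (Set.Icc 0 1) x) ∂μ ∂P ≤ 0 :=
  stmt_11_general P ρ μ hμρ hsupp f hf hbij hC1 hpos hstat hint hlogρ
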